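/- Let p be a prime and let f: ℤ_p → ℤ_p be a compatible, μ_p-preserving function whose coordinate functions satisfy φ_k(x_0,…,x_k) ≡ x_k + α_k(x_0,…,x_{k−1}) (mod p) for all k ≥ 1. Then for every k ≥ 1, Σ_{x=0}^{p^k−1} f(x) ≡ p^k·Σ_{x̄=0}^{p^k−1} α_k(x̄) + p^k(p^k−1)/2 (mod p^{k+1}), where on the right-hand side x̄ runs over the residues modulo p^k (identified with their digit vectors (x_0,…,x_{k−1})) and the sums of the values f(x) ∈ ℤ_p and α_k(x̄) ∈ {0,…,p−1} are taken in ℤ_p. -/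

import Mathlib

open MeasureTheory Function

variable {p : ℕ} [hp : Fact p.Prime]

noncomputable instance : MeasurableSpace ℤ_[p] := borel _
instance : BorelSpace ℤ_[p] := ⟨rfl⟩

/-- The Haar measure on `ℤ_[p]`, normalized so that `μp p ℤ_[p] = 1`. -/
noncomputable def μp (p : ℕ) [Fact p.Prime] : Measure ℤ_[p] :=
  Measure.addHaarMeasure ⊤

/-- A function `f : ℤ_[p] → ℤ_[p]` is compatible if it is 1-Lipschitz w.r.t. `|·|_p`. -/
def Compatible (f : ℤ_[p] → ℤ_[p]) : Prop :=
  ∀ x y : ℤ_[p], ‖f x - f y‖ ≤ ‖x - y‖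

/-- The `k`-th base-`p` digit of `x ∈ ℤ_[p]`, as a natural number in `{0,…,p-1}`. -/
noncomputable def digitN (x : ℤ_[p]) (k : ℕ) : ℕ := x.appr (k + 1) / p ^ k

/-- The `k`-th base-`p` digit of `x ∈ ℤ_[p]`, as an element of `ZMod p`. -/
noncomputable def digit (x : ℤ_[p]) (k : ℕ) : ZMod p := (digitN x k : ZMod p)

/-- `f` has coordinate representation given by the family `φ`: the `k`-th digit of `f x`
is `φ k xb x_k`, where `xb = x mod p^k ∈ {0,…,p^k−1}` encodes the digits `(x_0,…,x_{k-1})`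
and `x_k` is the `k`-th digit of `x`. -/
def CoordRep (f : ℤ_[p] → ℤ_[p]) (φ : ℕ → ℕ → ZMod p → ZMod p) : Prop :=
  ∀ (x : ℤ_[p]) (k : ℕ), digit (f x) k = φ k (x.appr k) (digit x k)

/-- The reduction of `f` modulo `p^k`, acting on natural-number residues `{0,…,p^k−1}`
(for `k = k'+1` this is the map `f_{k'}` on `ℤ/p^k ℤ`). -/
noncomputable def red (f : ℤ_[p] → ℤ_[p]) (k : ℕ) (m : ℕ) : ℕ := (f (m : ℤ_[p])).appr k

/-- A map of `ZMod n` is transitive (a single-cycle permutation) iff every point can be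
reached from every point by iteration. -/
def IsTransitive {n : ℕ} (g : ZMod n → ZMod n) : Prop :=
  ∀ a b : ZMod n, ∃ s : ℕ, g^[s] a = b

/-- A self-map of the residues `{0,…,N−1}` is transitive (single cycle). -/
def TransitiveOn (g : ℕ → ℕ) (N : ℕ) : Prop :=
  ∀ a, a < N → ∀ b, b < N → ∃ s : ℕ, g^[s] a = b

/-- `compSeq ψ g xb n = ψ (g^[n-1] xb) ∘ ⋯ ∘ ψ (g xb) ∘ ψ xb`. -/
def compSeq (ψ : ℕ → ZMod p → ZMod p) (g : ℕ → ℕ) (xb : ℕ) : ℕ → ZMod p → ZMod p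
  | 0 => id
  | n + 1 => ψ (g^[n] xb) ∘ compSeq ψ g xb n

/-- The permutation `F_{k,xb} = φ_{k,f_{k-1}^{(p^k-1)}(xb)} ∘ ⋯ ∘ φ_{k,xb}` of `ZMod p`. -/
noncomputable def Fperm (φ : ℕ → ℕ → ZMod p → ZMod p) (f : ℤ_[p] → ℤ_[p]) (k xb : ℕ) :
    ZMod p → ZMod p :=
  compSeq (φ k) (red f k) xb (p ^ k)

/-! For `m < p ^ k` the digits `0, …, k - 1` of `f m` encode `f m mod p ^ k`, and its digit `k`
is `φ_k(m, 0) = α_k(m)`, since the digit `k` of `m` vanishes; hence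
`f m ≡ (f m mod p ^ k) + p ^ k α_k(m) (mod p ^ (k + 1))`. A measure-preserving map has dense range,
and for a 1-Lipschitz map this makes the reduction `m ↦ f m mod p ^ k` surjective, hence a
permutation of `{0, …, p ^ k - 1}`; so these residues sum to `p ^ k (p ^ k - 1) / 2`. -/

open Finset

namespace PadicInt

lemma appr_eq_val_toZModPow (x : ℤ_[p]) (n : ℕ) : x.appr n = (toZModPow n x).val := by
  rw [show toZModPow n x = (x.appr n : ZMod (p ^ n)) from rfl,
    ZMod.val_cast_of_lt (x.appr_lt n)]

lemma appr_eq_of_sub_mem {x : ℤ_[p]} {n c : ℕ} (hc : c < p ^ n)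
    (h : x - c ∈ Ideal.span {(p : ℤ_[p]) ^ n}) : x.appr n = c := by
  rw [← ker_toZModPow, RingHom.sub_mem_ker_iff] at h
  rw [appr_eq_val_toZModPow, h, map_natCast, ZMod.val_cast_of_lt hc]

lemma appr_natCast_of_lt {n m : ℕ} (hm : m < p ^ n) : (m : ℤ_[p]).appr n = m :=
  appr_eq_of_sub_mem hm (by simp)

end PadicInt

open PadicInt

lemma appr_succ_eq_add_digitN (x : ℤ_[p]) (k : ℕ) :
    x.appr (k + 1) = x.appr k + p ^ k * digitN x k := by
  obtain ⟨t, ht⟩ := x.dvd_appr_sub_appr k (k + 1) k.le_succ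
  have hmono : x.appr k ≤ x.appr (k + 1) := x.appr_mono k.le_succ
  have heq : x.appr (k + 1) = x.appr k + p ^ k * t := by omega
  rw [digitN, heq, Nat.add_mul_div_left _ _ (pow_pos hp.out.pos k),
    Nat.div_eq_of_lt (x.appr_lt k), zero_add]

lemma digitN_lt (x : ℤ_[p]) (k : ℕ) : digitN x k < p := by
  have h := x.appr_lt (k + 1)
  rw [appr_succ_eq_add_digitN, pow_succ] at h
  exact lt_of_mul_lt_mul_left (by omega : p ^ k * digitN x k < p ^ k * p) (Nat.zero_le _)

lemma digit_natCast_of_lt {k m : ℕ} (hm : m < p ^ k) : digit (m : ℤ_[p]) k = 0 := by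
  have hm' : m < p ^ (k + 1) := hm.trans_le (Nat.pow_le_pow_right hp.out.pos k.le_succ)
  rw [digit, digitN, appr_natCast_of_lt hm', Nat.div_eq_of_lt hm, Nat.cast_zero]

lemma CoordRep.appr_succ_apply_natCast {f : ℤ_[p] → ℤ_[p]} {φ : ℕ → ℕ → ZMod p → ZMod p}
    (hφ : CoordRep f φ) {k m : ℕ} (hm : m < p ^ k) :
    (f m).appr (k + 1) = red f k m + p ^ k * (φ k m 0).val := by
  have hdigit : digit (f m) k = φ k m 0 := by
    rw [hφ, appr_natCast_of_lt hm, digit_natCast_of_lt hm]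
  rw [appr_succ_eq_add_digitN, red, ← hdigit, digit, ZMod.val_cast_of_lt (digitN_lt _ _)]

lemma Compatible.sub_mem_span_pow {f : ℤ_[p] → ℤ_[p]} (hf : Compatible f) {x y : ℤ_[p]}
    {n : ℕ} (h : x - y ∈ Ideal.span {(p : ℤ_[p]) ^ n}) :
    f x - f y ∈ Ideal.span {(p : ℤ_[p]) ^ n} := by
  rw [← norm_le_pow_iff_mem_span_pow] at h ⊢
  exact (hf x y).trans h

lemma Compatible.red_appr {f : ℤ_[p] → ℤ_[p]} (hf : Compatible f) (x : ℤ_[p]) (n : ℕ) :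
    red f n (x.appr n) = (f x).appr n := by
  refine appr_eq_of_sub_mem ((f x).appr_lt n) ?_
  rw [← sub_add_sub_cancel _ (f x)]
  refine Ideal.add_mem _ (hf.sub_mem_span_pow ?_) (appr_spec n _)
  rw [← neg_mem_iff, neg_sub]
  exact appr_spec n x

lemma MeasureTheory.MeasurePreserving.denseRange {α β : Type*} [MeasurableSpace α]
    [MeasurableSpace β] [TopologicalSpace β] [OpensMeasurableSpace β] {μ : Measure α}
    {ν : Measure β} [ν.IsOpenPosMeasure] {f : α → β} (hf : MeasurePreserving f μ ν) :
    DenseRange f := by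
  refine dense_iff_inter_open.2 fun U hU hne => ?_
  have hpre : μ (f ⁻¹' U) ≠ 0 := by
    rw [hf.measure_preimage hU.measurableSet.nullMeasurableSet]
    exact (hU.measure_pos ν hne).ne'
  obtain ⟨x, hx⟩ := nonempty_of_measure_ne_zero hpre
  exact ⟨f x, hx, x, rfl⟩

instance : (μp p).IsAddHaarMeasure := by
  unfold μp
  infer_instance

lemma Compatible.surjOn_red {f : ℤ_[p] → ℤ_[p]} (hf : Compatible f) (hdense : DenseRange f)
    (n : ℕ) : Set.SurjOn (red f n) (range (p ^ n)) (range (p ^ n)) := by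
  intro c hc
  have hr : (0 : ℝ) < (p : ℝ) ^ (-(n : ℤ)) := zpow_pos (by exact_mod_cast hp.out.pos) _
  obtain ⟨y, hy⟩ := hdense.exists_mem_open
    (IsUltrametricDist.isOpen_closedBall (c : ℤ_[p]) hr.ne') ⟨_, Metric.mem_closedBall_self hr.le⟩
  rw [Metric.mem_closedBall, dist_eq_norm, norm_le_pow_iff_mem_span_pow] at hy
  exact ⟨y.appr n, mem_range.2 (y.appr_lt n),
    (hf.red_appr y n).trans (appr_eq_of_sub_mem (mem_range.1 hc) hy)⟩

lemma Compatible.sum_range_red {f : ℤ_[p] → ℤ_[p]} (hf : Compatible f)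
    (hdense : DenseRange f) (n : ℕ) :
    ∑ m ∈ range (p ^ n), red f n m = ∑ m ∈ range (p ^ n), m := by
  have hmaps : Set.MapsTo (red f n) (range (p ^ n)) (range (p ^ n)) :=
    fun m _ => mem_range.2 ((f m).appr_lt n)
  have hsurj := hf.surjOn_red hdense n
  exact sum_nbij (red f n) hmaps (injOn_of_surjOn_of_card_le _ hmaps hsurj le_rfl) hsurj
    fun _ _ => rfl

/-- For a compatible measure-preserving `f` whose coordinate functions have the
translation form `φ_k(x̄, x_k) = x_k + α_k(x̄)` for all `k ≥ 1`, one has, for every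
`k ≥ 1`, `Σ_{x=0}^{p^k−1} f(x) ≡ p^k·Σ_{x̄=0}^{p^k−1} α_k(x̄) + p^k(p^k−1)/2
(mod p^{k+1})`, the sums being taken in `ℤ_[p]`. -/
theorem sum_congruence_of_translation_form
    (f : ℤ_[p] → ℤ_[p]) (φ : ℕ → ℕ → ZMod p → ZMod p) (α : ℕ → ℕ → ZMod p)
    (hf : Compatible f) (hφ : CoordRep f φ)
    (hmp : MeasurePreserving f (μp p) (μp p))
    (hform : ∀ k, 1 ≤ k → ∀ xb, xb < p ^ k → ∀ d : ZMod p, φ k xb d = d + α k xb) :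
    ∀ k, 1 ≤ k →
      (p : ℤ_[p]) ^ (k + 1) ∣
        (∑ x ∈ Finset.range (p ^ k), f (x : ℤ_[p]) -
          ((p : ℤ_[p]) ^ k * ∑ xb ∈ Finset.range (p ^ k), ((α k xb).val : ℤ_[p]) +
            ((p ^ k * (p ^ k - 1) / 2 : ℕ) : ℤ_[p]))) := by
  intro k hk
  have happr : ∀ m ∈ range (p ^ k),
      ((f m).appr (k + 1) : ℤ_[p]) = red f k m + p ^ k * (α k m).val := by
    intro m hm
    rw [hφ.appr_succ_apply_natCast (mem_range.1 hm), hform k hk m (mem_range.1 hm), zero_add]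
    norm_cast
  have hsum : ∑ m ∈ range (p ^ k), f m -
        ((p : ℤ_[p]) ^ k * ∑ m ∈ range (p ^ k), ((α k m).val : ℤ_[p]) +
          ((p ^ k * (p ^ k - 1) / 2 : ℕ) : ℤ_[p])) =
      ∑ m ∈ range (p ^ k), (f m - (f m).appr (k + 1)) := by
    rw [sum_sub_distrib, sum_congr rfl happr, sum_add_distrib, ← mul_sum, ← Nat.cast_sum,
      ← Nat.cast_sum, hf.sum_range_red hmp.denseRange, sum_range_id]
    ring
  rw [hsum]
  exact dvd_sum fun m _ => Ideal.mem_span_singleton.1 (appr_spec (k + 1) _)
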